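/- Let C be a cochain complex of ℚ-vector spaces indexed by the natural numbers, with each C^n finite-dimensional, let k ≥ 2 be an integer, and let ι : C[k] → C be an injective morphism of cochain complexes from the k-fold shift of C into C, with quotient complex Q = C / ι(C[k]). For each n let I_n ⊆ H^n(C) denote the image of the map H^n(ι) : H^{n−k}(C) → H^n(C) induced by ι (so I_n = 0 for n < k, and in particular I_0 = 0). Then for every n ≥ 0, dim_ℚ H^n(Q) = dim_ℚ H^n(C) + dim_ℚ H^{n−k+1}(C) − dim_ℚ I_n − dim_ℚ I_{n+1}; equivalently, S_{H(Q)}(T) = (1 + T^{k−1})·S_{H(C)}(T) − (1+T)·S_I(T)/T, where I = ⊕_n I_n. -/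
import Mathlib


open Module

private lemma finrank_map_add' {V W : Type} [AddCommGroup V] [Module ℚ V]
    [AddCommGroup W] [Module ℚ W] [FiniteDimensional ℚ V]
    (f : V →ₗ[ℚ] W) (S : Submodule ℚ V) :
    finrank ℚ (S.map f) + finrank ℚ ((LinearMap.ker f).comap S.subtype) = finrank ℚ S := by
  have h := LinearMap.finrank_range_add_finrank_ker (f.comp S.subtype)
  rwa [LinearMap.range_comp, Submodule.range_subtype, LinearMap.ker_comp] at h

private lemma finrank_comap_subtype' {V : Type} [AddCommGroup V] [Module ℚ V]
    (S P : Submodule ℚ V) :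
    finrank ℚ (P.comap S.subtype) = finrank ℚ (P ⊓ S : Submodule ℚ V) := by
  have h : P.comap S.subtype = (P ⊓ S).comap S.subtype := by
    rw [Submodule.comap_inf, Submodule.comap_subtype_self, inf_top_eq]
  rw [h]
  exact (Submodule.comapSubtypeEquivOfLe inf_le_right).finrank_eq

private lemma F8gen {A B X Y QX : Type} [AddCommGroup A] [Module ℚ A]
    [AddCommGroup B] [Module ℚ B] [AddCommGroup X] [Module ℚ X]
    [AddCommGroup Y] [Module ℚ Y] [AddCommGroup QX] [Module ℚ QX]
    [FiniteDimensional ℚ X]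
    (dA : A →ₗ[ℚ] B) (dX : X →ₗ[ℚ] Y) (ι0 : A →ₗ[ℚ] X) (ι1 : B →ₗ[ℚ] Y)
    (g0 : X →ₗ[ℚ] QX)
    (hι0 : Function.Injective ι0) (hι1 : Function.Injective ι1)
    (hcomm : ι1.comp dA = dX.comp ι0)
    (hker : LinearMap.ker g0 = LinearMap.range ι0)
    (P : Submodule ℚ (LinearMap.ker dX)) :
    finrank ℚ (LinearMap.ker dA)
      = finrank ℚ (Submodule.map P.mkQ
            (((LinearMap.ker dA).map ι0).comap (LinearMap.ker dX).subtype))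
        + finrank ℚ (P ⊓ (LinearMap.ker g0).comap (LinearMap.ker dX).subtype :
            Submodule ℚ (LinearMap.ker dX)) := by
  set S : Submodule ℚ (LinearMap.ker dX) :=
    ((LinearMap.ker dA).map ι0).comap (LinearMap.ker dX).subtype with hSdef
  have hle : (LinearMap.ker dA).map ι0 ≤ LinearMap.ker dX := by
    rintro x ⟨a, ha, rfl⟩
    have h1 := LinearMap.congr_fun hcomm a
    simp only [LinearMap.comp_apply] at h1
    have ha' : dA a = 0 := ha
    show dX (ι0 a) = 0
    rw [← h1, ha', map_zero]
  have h1 : finrank ℚ S = finrank ℚ (LinearMap.ker dA) := by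
    rw [(Submodule.comapSubtypeEquivOfLe hle).finrank_eq]
    exact ((Submodule.equivMapOfInjective ι0 hι0 _).finrank_eq).symm
  have h2 := finrank_map_add' P.mkQ S
  rw [Submodule.ker_mkQ] at h2
  have hS : S = (LinearMap.ker g0).comap (LinearMap.ker dX).subtype := by
    rw [hker]
    ext ⟨x, hx⟩
    simp only [hSdef, Submodule.mem_comap, Submodule.coe_subtype, Submodule.mem_map,
      LinearMap.mem_range, LinearMap.mem_ker]
    constructor
    · rintro ⟨a, _, rfl⟩; exact ⟨a, rfl⟩
    · rintro ⟨a, rfl⟩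
      refine ⟨a, ?_, rfl⟩
      apply hι1
      have h1 := LinearMap.congr_fun hcomm a
      simp only [LinearMap.comp_apply] at h1
      rw [LinearMap.mem_ker] at hx
      rw [h1, map_zero, hx]
  have h3 : finrank ℚ (P.comap S.subtype) =
      finrank ℚ (P ⊓ (LinearMap.ker g0).comap (LinearMap.ker dX).subtype :
        Submodule ℚ (LinearMap.ker dX)) := by
    rw [finrank_comap_subtype', hS]
  omega


/-- The coboundaries of a cochain complex of `ℚ`-vector spaces indexed by `ℕ`,
viewed as a submodule of the cocycles in each degree (with the convention that there
is no differential into degree `0`). -/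
noncomputable def coboundaries (C : ℕ → Type) [∀ n, AddCommGroup (C n)]
    [∀ n, Module ℚ (C n)] (d : ∀ n, C n →ₗ[ℚ] C (n + 1)) :
    ∀ n : ℕ, Submodule ℚ (LinearMap.ker (d n))
  | 0 => ⊥
  | (n + 1) => (LinearMap.range (d n)).comap (LinearMap.ker (d (n + 1))).subtype

/-- The dimension of the `n`-th cohomology `H^n = ker d^n / im d^{n-1}` of a cochain
complex of `ℚ`-vector spaces indexed by `ℕ`. -/
noncomputable def cohomologyDim (C : ℕ → Type) [∀ n, AddCommGroup (C n)]
    [∀ n, Module ℚ (C n)] (d : ∀ n, C n →ₗ[ℚ] C (n + 1)) (n : ℕ) : ℕ :=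
  Module.finrank ℚ (LinearMap.ker (d n) ⧸ coboundaries C d n)

/-- Given a chain map `ι` from the `k`-fold shift of `C` to `C`, the dimension of the
image `I_{k+n}` of the induced map `H^n(C) → H^{k+n}(C)` on cohomology: the image in
`H^{k+n}(C)` of the classes of those cocycles of degree `k + n` lying in
`ι(ker d^n)`. -/
noncomputable def inducedImageDim (C : ℕ → Type) [∀ n, AddCommGroup (C n)]
    [∀ n, Module ℚ (C n)] (d : ∀ n, C n →ₗ[ℚ] C (n + 1)) (k : ℕ)
    (ι : ∀ n, C n →ₗ[ℚ] C (k + n)) (n : ℕ) : ℕ :=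
  Module.finrank ℚ
    (Submodule.map (coboundaries C d (k + n)).mkQ
      (((LinearMap.ker (d n)).map (ι n)).comap (LinearMap.ker (d (k + n))).subtype))

/-- Let `C` be a cochain complex of `ℚ`-vector spaces indexed by `ℕ` with
finite-dimensional components, let `k ≥ 2`, and let `ι : C[k] → C` be an injective
morphism of cochain complexes from the `k`-fold shift of `C` (a family of injective
linear maps `C^n → C^{k+n}` commuting with the differentials), with quotient complex
`Q = C / ι(C[k])` (realized as a complex `Q` together with a surjective chain map
`g : C → Q` whose kernel in degree `k + n` is the image of `ι` and which is injective
in degrees `< k`).  For each `n` let `I_n ⊆ H^n(C)` be the image of the induced map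
`H^{n−k}(C) → H^n(C)` (so `I_n = 0` for `n < k`).  Then for every `n ≥ 0`,
`dim H^n(Q) = dim H^n(C) + dim H^{n−k+1}(C) − dim I_n − dim I_{n+1}`
(stated additively, with the convention `H^m(C) = 0` for `m < 0`); equivalently,
`S_{H(Q)}(T) = (1 + T^{k−1})·S_{H(C)}(T) − (1+T)·S_I(T)/T`. -/
theorem cohomologyDim_shift_quotient_eq
    (C Q : ℕ → Type)
    [∀ n, AddCommGroup (C n)] [∀ n, Module ℚ (C n)] [∀ n, FiniteDimensional ℚ (C n)]
    [∀ n, AddCommGroup (Q n)] [∀ n, Module ℚ (Q n)]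
    (dC : ∀ n, C n →ₗ[ℚ] C (n + 1)) (dQ : ∀ n, Q n →ₗ[ℚ] Q (n + 1))
    (hdC : ∀ n, (dC (n + 1)).comp (dC n) = 0)
    (hdQ : ∀ n, (dQ (n + 1)).comp (dQ n) = 0)
    (k : ℕ) (hk : 2 ≤ k)
    (ι : ∀ n, C n →ₗ[ℚ] C (k + n))
    (hι_inj : ∀ n, Function.Injective (ι n))
    (hι_comm : ∀ n, (ι (n + 1)).comp (dC n) = (dC (k + n)).comp (ι n))
    (g : ∀ n, C n →ₗ[ℚ] Q n)
    (hg_comm : ∀ n, (g (n + 1)).comp (dC n) = (dQ n).comp (g n))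
    (hg_surj : ∀ n, Function.Surjective (g n))
    (hg_ker_low : ∀ n, n < k → LinearMap.ker (g n) = ⊥)
    (hg_ker : ∀ n, LinearMap.ker (g (k + n)) = LinearMap.range (ι n)) :
    ∀ n : ℕ,
      cohomologyDim Q dQ n
        + (if k ≤ n then inducedImageDim C dC k ι (n - k) else 0)
        + (if k ≤ n + 1 then inducedImageDim C dC k ι (n + 1 - k) else 0)
      = cohomologyDim C dC n
        + (if k ≤ n + 1 then cohomologyDim C dC (n + 1 - k) else 0) := by
  haveI hQfd : ∀ n, FiniteDimensional ℚ (Q n) := fun n =>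
    Module.Finite.of_surjective (g n) (hg_surj n)
  have A1 : ∀ n, finrank ℚ (LinearMap.range (dC n)) + finrank ℚ (LinearMap.ker (dC n))
      = finrank ℚ (C n) := fun n => LinearMap.finrank_range_add_finrank_ker (dC n)
  have A2 : ∀ n, finrank ℚ (LinearMap.range (dQ n)) + finrank ℚ (LinearMap.ker (dQ n))
      = finrank ℚ (Q n) := fun n => LinearMap.finrank_range_add_finrank_ker (dQ n)
  have A4 : ∀ n, finrank ℚ (Q n) + finrank ℚ (LinearMap.ker (g n)) = finrank ℚ (C n) := by
    intro n
    have h := LinearMap.finrank_range_add_finrank_ker (g n)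
    rwa [LinearMap.range_eq_top.mpr (hg_surj n), finrank_top] at h
  have A5a : ∀ n, n < k → finrank ℚ (LinearMap.ker (g n)) = 0 := by
    intro n h; rw [hg_ker_low n h]; exact finrank_bot ℚ _
  have A5b : ∀ m, finrank ℚ (LinearMap.ker (g (k + m))) = finrank ℚ (C m) := by
    intro m; rw [hg_ker m]; exact LinearMap.finrank_range_of_inj (hι_inj m)
  have hA3C : ∀ n, cohomologyDim C dC n + finrank ℚ (coboundaries C dC n)
      = finrank ℚ (LinearMap.ker (dC n)) := fun n =>
    Submodule.finrank_quotient_add_finrank _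
  have hA3Q : ∀ n, cohomologyDim Q dQ n + finrank ℚ (coboundaries Q dQ n)
      = finrank ℚ (LinearMap.ker (dQ n)) := fun n =>
    Submodule.finrank_quotient_add_finrank _
  have hcbC0 : finrank ℚ (coboundaries C dC 0) = 0 := by
    show finrank ℚ (⊥ : Submodule ℚ (LinearMap.ker (dC 0))) = 0
    exact finrank_bot ℚ _
  have hcbQ0 : finrank ℚ (coboundaries Q dQ 0) = 0 := by
    show finrank ℚ (⊥ : Submodule ℚ (LinearMap.ker (dQ 0))) = 0
    exact finrank_bot ℚ _
  have hcbCS : ∀ p, finrank ℚ (coboundaries C dC (p + 1))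
      = finrank ℚ (LinearMap.range (dC p)) := by
    intro p
    have hle : LinearMap.range (dC p) ≤ LinearMap.ker (dC (p + 1)) :=
      LinearMap.range_le_ker_iff.mpr (hdC p)
    exact (Submodule.comapSubtypeEquivOfLe hle).finrank_eq
  have hcbQS : ∀ p, finrank ℚ (coboundaries Q dQ (p + 1))
      = finrank ℚ (LinearMap.range (dQ p)) := by
    intro p
    have hle : LinearMap.range (dQ p) ≤ LinearMap.ker (dQ (p + 1)) :=
      LinearMap.range_le_ker_iff.mpr (hdQ p)
    exact (Submodule.comapSubtypeEquivOfLe hle).finrank_eq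
  have hA6 : ∀ n, finrank ℚ (LinearMap.ker ((g (n + 1)).comp (dC n)))
      = finrank ℚ (LinearMap.ker (dQ n)) + finrank ℚ (LinearMap.ker (g n)) := by
    intro n
    set W := LinearMap.ker ((g (n + 1)).comp (dC n)) with hW
    have e1 := finrank_map_add' (g n) W
    have e2 : W.map (g n) = LinearMap.ker (dQ n) := by
      ext y
      simp only [Submodule.mem_map, LinearMap.mem_ker, hW, LinearMap.comp_apply]
      constructor
      · rintro ⟨x, hx, rfl⟩
        have h1 := LinearMap.congr_fun (hg_comm n) x
        simp only [LinearMap.comp_apply] at h1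
        rw [← h1]; exact hx
      · intro hy
        obtain ⟨x, rfl⟩ := hg_surj n y
        refine ⟨x, ?_, rfl⟩
        have h1 := LinearMap.congr_fun (hg_comm n) x
        simp only [LinearMap.comp_apply] at h1
        rw [h1]; exact hy
    have e3 : LinearMap.ker (g n) ≤ W := by
      intro x hx
      have hx' : g n x = 0 := hx
      show g (n + 1) (dC n x) = 0
      have h1 := LinearMap.congr_fun (hg_comm n) x
      simp only [LinearMap.comp_apply] at h1
      rw [h1, hx', map_zero]
    have e4 : finrank ℚ ((LinearMap.ker (g n)).comap W.subtype)
        = finrank ℚ (LinearMap.ker (g n)) := by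
      rw [finrank_comap_subtype', inf_eq_left.mpr e3]
    rw [e2, e4] at e1
    omega
  have hA7 : ∀ n, finrank ℚ (LinearMap.ker ((g (n + 1)).comp (dC n)))
      = finrank ℚ (LinearMap.ker (dC n))
        + finrank ℚ (LinearMap.range (dC n) ⊓ LinearMap.ker (g (n + 1)) :
            Submodule ℚ (C (n + 1))) := by
    intro n
    set W := LinearMap.ker ((g (n + 1)).comp (dC n)) with hW
    have e1 := finrank_map_add' (dC n) W
    have e2 : W.map (dC n) = LinearMap.range (dC n) ⊓ LinearMap.ker (g (n + 1)) := by
      ext y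
      simp only [Submodule.mem_map, Submodule.mem_inf, LinearMap.mem_ker,
        LinearMap.mem_range, hW, LinearMap.comp_apply]
      constructor
      · rintro ⟨x, hx, rfl⟩; exact ⟨⟨x, rfl⟩, hx⟩
      · rintro ⟨⟨x, rfl⟩, hy⟩; exact ⟨x, hy, rfl⟩
    have e3 : LinearMap.ker (dC n) ≤ W := by
      intro x hx
      have hx' : dC n x = 0 := hx
      show g (n + 1) (dC n x) = 0
      rw [hx', map_zero]
    have e4 : finrank ℚ ((LinearMap.ker (dC n)).comap W.subtype)
        = finrank ℚ (LinearMap.ker (dC n)) := by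
      rw [finrank_comap_subtype', inf_eq_left.mpr e3]
    rw [e2, e4] at e1
    omega
  have hA67 : ∀ n, finrank ℚ (LinearMap.ker (dQ n)) + finrank ℚ (LinearMap.ker (g n))
      = finrank ℚ (LinearMap.ker (dC n))
        + finrank ℚ (LinearMap.range (dC n) ⊓ LinearMap.ker (g (n + 1)) :
            Submodule ℚ (C (n + 1))) :=
    fun n => (hA6 n).symm.trans (hA7 n)
  have vv_succ : ∀ N p, N = p + 1 → finrank ℚ (coboundaries C dC N
        ⊓ (LinearMap.ker (g N)).comap (LinearMap.ker (dC N)).subtype :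
          Submodule ℚ (LinearMap.ker (dC N)))
      = finrank ℚ (LinearMap.range (dC p) ⊓ LinearMap.ker (g (p + 1)) :
          Submodule ℚ (C (p + 1))) := by
    intro N p hNp
    subst hNp
    have hle : LinearMap.range (dC p) ⊓ LinearMap.ker (g (p + 1))
        ≤ LinearMap.ker (dC (p + 1)) :=
      le_trans inf_le_left (LinearMap.range_le_ker_iff.mpr (hdC p))
    have h1 : (coboundaries C dC (p + 1)
          ⊓ (LinearMap.ker (g (p + 1))).comap (LinearMap.ker (dC (p + 1))).subtype :
            Submodule ℚ (LinearMap.ker (dC (p + 1))))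
        = (LinearMap.range (dC p) ⊓ LinearMap.ker (g (p + 1))).comap
            (LinearMap.ker (dC (p + 1))).subtype := by
      rw [Submodule.comap_inf]
      rfl
    rw [h1]
    exact (Submodule.comapSubtypeEquivOfLe hle).finrank_eq
  have hHQsucc : ∀ N p, N = p + 1 → cohomologyDim Q dQ N
      + finrank ℚ (LinearMap.range (dQ p)) = finrank ℚ (LinearMap.ker (dQ N)) := by
    intro N p hNp
    subst hNp
    rw [← hcbQS p]
    exact hA3Q (p + 1)
  have hHCsucc : ∀ N p, N = p + 1 → cohomologyDim C dC N
      + finrank ℚ (LinearMap.range (dC p)) = finrank ℚ (LinearMap.ker (dC N)) := by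
    intro N p hNp
    subst hNp
    rw [← hcbCS p]
    exact hA3C (p + 1)
  have hu0 : ∀ n, n + 1 < k →
      finrank ℚ (LinearMap.range (dC n) ⊓ LinearMap.ker (g (n + 1)) :
        Submodule ℚ (C (n + 1))) = 0 := by
    intro n h
    rw [hg_ker_low (n + 1) h, inf_bot_eq]
    exact finrank_bot ℚ _
  have F8' : ∀ m p, k + m = p + 1 →
      finrank ℚ (LinearMap.ker (dC m))
        = inducedImageDim C dC k ι m
          + finrank ℚ (LinearMap.range (dC p) ⊓ LinearMap.ker (g (p + 1)) :
              Submodule ℚ (C (p + 1))) := by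
    intro m p hp
    have h1 := F8gen (dC m) (dC (k + m)) (ι m) (ι (m + 1)) (g (k + m)) (hι_inj m)
      (hι_inj (m + 1)) (hι_comm m) (hg_ker m) (coboundaries C dC (k + m))
    have h2 : inducedImageDim C dC k ι m
        = finrank ℚ (Submodule.map (coboundaries C dC (k + m)).mkQ
            (((LinearMap.ker (dC m)).map (ι m)).comap (LinearMap.ker (dC (k + m))).subtype)) :=
      rfl
    rw [← h2] at h1
    rw [vv_succ (k + m) p hp] at h1
    exact h1
  intro n
  by_cases hc1 : k ≤ n
  · obtain ⟨m, rfl⟩ : ∃ m, n = k + m := ⟨n - k, by omega⟩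
    rw [if_pos (show k ≤ k + m by omega), if_pos (show k ≤ k + m + 1 by omega),
      if_pos (show k ≤ k + m + 1 by omega),
      show k + m - k = m by omega, show k + m + 1 - k = m + 1 by omega]
    obtain ⟨p, hp⟩ : ∃ p, k + m = p + 1 := ⟨k + m - 1, by omega⟩
    have e1 := hHQsucc (k + m) p hp
    have e2 := hHCsucc (k + m) p hp
    have e3 := hHCsucc (m + 1) m rfl
    have e4 := F8' m p hp
    have e5 := F8' (m + 1) (k + m) (by omega)
    have e6 := hA67 (k + m)
    have e7 := hA67 p
    have e8 := A5b m
    have e9 := A1 m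
    have e10 := A1 p
    have e11 := A2 p
    have e12 := A4 p
    omega
  · rw [if_neg hc1]
    by_cases hc2 : k ≤ n + 1
    · obtain ⟨n', rfl⟩ : ∃ n', n = n' + 1 := ⟨n - 1, by omega⟩
      rw [if_pos hc2, if_pos hc2, show n' + 1 + 1 - k = 0 by omega]
      have e1 := hHQsucc (n' + 1) n' rfl
      have e2 := hHCsucc (n' + 1) n' rfl
      have e3 := hA3C 0
      have e3' := hcbC0
      have e4 := F8' 0 (n' + 1) (by omega)
      have e5 := hA67 (n' + 1)
      have e6 := hA67 n'
      have e7 := A5a (n' + 1) (by omega)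
      have e8 := A5a n' (by omega)
      have e9 := hu0 n' (by omega)
      have e10 := A1 n'
      have e11 := A2 n'
      have e12 := A4 n'
      omega
    · rw [if_neg hc2, if_neg hc2]
      rcases n with _ | n'
      · have e1 := hA3Q 0
        have e1' := hcbQ0
        have e2 := hA3C 0
        have e2' := hcbC0
        have e3 := hA67 0
        have e4 := A5a 0 (by omega)
        have e5 := hu0 0 (by omega)
        omega
      · have e1 := hHQsucc (n' + 1) n' rfl
        have e2 := hHCsucc (n' + 1) n' rfl
        have e3 := hA67 (n' + 1)
        have e4 := A5a (n' + 1) (by omega)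
        have e5 := hu0 (n' + 1) (by omega)
        have e6 := hA67 n'
        have e7 := A5a n' (by omega)
        have e8 := hu0 n' (by omega)
        have e9 := A1 n'
        have e10 := A2 n'
        have e11 := A4 n'
        omega
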